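/- arXiv:1411.5260 — 7 statements merged into one kernel-verified Lean document; each statement's English description precedes it below -/
import Mathlib

section
/- Fix an integer K ≥ 1 and boundary points π_1, …, π_K with 0 < π_1 < ⋯ < π_K < 1, and let p ∈ [0,1] satisfy p ≠ π_k for every k. Then the function h ↦ R_p(h) on {0,1,…,K} attains its minimum uniquely at h* = #{k ∈ {1,…,K} : π_k < p}; that is, R_p(h*) < R_p(h) for every h ∈ {0,…,K} with h ≠ h*. (This is the Bayes optimal rule for the generalized 0–1 loss: W*_π(x) = ω_k exactly when p(x) lies in the interval ω_k.) -/
/-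
Moving the prediction from `ω_h` to `ω_{h+1}` changes the risk by `(2/K)(π_{h+1} - p)`, so
`R_p` strictly decreases while `π_{h+1} < p` and strictly increases once `π_{h+1} > p`. Since the
`π_k` increase, the first `h*` of them lie below `p` and the rest above it: `R_p` is a valley with
its bottom at `h*`.
-/

open Finset

noncomputable def condRisk (K : ℕ) (pp : ℕ → ℝ) (p : ℝ) (h : ℕ) : ℝ :=
  (2 / K) * (p * ∑ k ∈ Finset.Icc (h + 1) K, (1 - pp k)
    + (1 - p) * ∑ k ∈ Finset.Icc 1 h, pp k)

section Boundaries

variable {α : Type*} [LinearOrder α] {π : ℕ → α} {K k : ℕ} {p : α}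

lemma strictMonoOn_Icc_of_lt_succ (hπ : ∀ k, 1 ≤ k → k < K → π k < π (k + 1)) :
    StrictMonoOn π (Set.Icc 1 K) :=
  strictMonoOn_of_lt_succ Set.ordConnected_Icc fun a _ ha hsucc ↦ by
    rw [Order.succ_eq_add_one] at hsucc ⊢
    exact hπ a ha.1 (by simpa using hsucc.2)

lemma lt_of_le_card_filter_lt (hπ : MonotoneOn π (Set.Icc 1 K)) (hk : 1 ≤ k)
    (hkm : k ≤ #{j ∈ Icc 1 K | π j < p}) : π k < p := by
  by_contra! hpk
  have hkK : k ≤ K := hkm.trans (by simpa using card_filter_le (Icc 1 K) _)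
  have hsub : {j ∈ Icc 1 K | π j < p} ⊆ Ico 1 k := by
    intro j hj
    rw [mem_filter, mem_Icc] at hj
    refine mem_Ico.2 ⟨hj.1.1, lt_of_not_ge fun hkj ↦ ?_⟩
    exact (hpk.trans (hπ ⟨hk, hkK⟩ hj.1 hkj)).not_gt hj.2
  have := card_le_card hsub
  simp only [Nat.card_Ico] at this
  omega

lemma le_of_card_filter_lt_lt (hπ : MonotoneOn π (Set.Icc 1 K))
    (hmk : #{j ∈ Icc 1 K | π j < p} < k) (hkK : k ≤ K) : p ≤ π k := by
  by_contra! hkp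
  have hsub : Icc 1 k ⊆ {j ∈ Icc 1 K | π j < p} := by
    intro j hj
    rw [mem_Icc] at hj
    refine mem_filter.2 ⟨mem_Icc.2 ⟨hj.1, hj.2.trans hkK⟩, ?_⟩
    exact (hπ ⟨hj.1, hj.2.trans hkK⟩ ⟨hj.1.trans hj.2, hkK⟩ hj.2).trans_lt hkp
  have := card_le_card hsub
  simp only [Nat.card_Icc] at this
  omega

end Boundaries

section Risk

variable {K : ℕ} {pp : ℕ → ℝ} {p : ℝ} {h : ℕ}

lemma condRisk_succ_sub (hh : h < K) :
    condRisk K pp p (h + 1) - condRisk K pp p h = 2 / K * (pp (h + 1) - p) := by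
  have hhigh : ∑ k ∈ Icc (h + 1) K, (1 - pp k)
      = (1 - pp (h + 1)) + ∑ k ∈ Icc (h + 1 + 1) K, (1 - pp k) := by
    rw [← insert_Icc_add_one_left_eq_Icc (by omega), sum_insert (by simp)]
  have hlow : ∑ k ∈ Icc 1 (h + 1), pp k = ∑ k ∈ Icc 1 h, pp k + pp (h + 1) :=
    sum_Icc_succ_top (by omega) _
  simp only [condRisk, hhigh, hlow]
  ring

lemma condRisk_succ_lt (hh : h < K) (hp : pp (h + 1) < p) :
    condRisk K pp p (h + 1) < condRisk K pp p h := by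
  have hK : (0 : ℝ) < 2 / K := div_pos two_pos (by exact_mod_cast h.zero_le.trans_lt hh)
  linarith [condRisk_succ_sub (pp := pp) (p := p) hh, mul_neg_of_pos_of_neg hK (sub_neg.2 hp)]

lemma condRisk_lt_succ (hh : h < K) (hp : p < pp (h + 1)) :
    condRisk K pp p h < condRisk K pp p (h + 1) := by
  have hK : (0 : ℝ) < 2 / K := div_pos two_pos (by exact_mod_cast h.zero_le.trans_lt hh)
  linarith [condRisk_succ_sub (pp := pp) (p := p) hh, mul_pos hK (sub_pos.2 hp)]

end Risk

theorem stmt_0_general (K : ℕ) (pp : ℕ → ℝ)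
    (hmono : ∀ k, 1 ≤ k → k < K → pp k < pp (k + 1))
    (p : ℝ)
    (hne : ∀ k ∈ Finset.Icc 1 K, p ≠ pp k) :
    ∀ h ≤ K, h ≠ ((Finset.Icc 1 K).filter fun k => pp k < p).card →
      condRisk K pp p (((Finset.Icc 1 K).filter fun k => pp k < p).card)
        < condRisk K pp p h := by
  intro h hhK hhm
  set m := #{k ∈ Icc 1 K | pp k < p}
  have hπ := (strictMonoOn_Icc_of_lt_succ hmono).monotoneOn
  have hmK : m ≤ K := by simpa using card_filter_le (Icc 1 K) _
  rcases hhm.lt_or_gt with hlt | hgt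
  · have hfall : StrictAntiOn (condRisk K pp p) (Set.Iic m) :=
      strictAntiOn_of_succ_lt Set.ordConnected_Iic fun a _ _ ha ↦ by
        rw [Order.succ_eq_add_one, Set.mem_Iic] at *
        exact condRisk_succ_lt (by omega) (lt_of_le_card_filter_lt hπ (by omega) ha)
    exact hfall hlt.le (Set.mem_Iic.2 le_rfl) hlt
  · have hrise : StrictMonoOn (condRisk K pp p) (Set.Icc m K) :=
      strictMonoOn_of_lt_succ Set.ordConnected_Icc fun a _ ha ha1 ↦ by
        rw [Order.succ_eq_add_one, Set.mem_Icc] at *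
        have hpa := le_of_card_filter_lt_lt (p := p) hπ (by omega) ha1.2
        exact condRisk_lt_succ (by omega)
          (hpa.lt_of_ne (hne (a + 1) (mem_Icc.2 ⟨by omega, ha1.2⟩)))
    exact hrise ⟨le_rfl, hmK⟩ ⟨hgt.le, hhK⟩ hgt

/-- The Bayes optimal rule for the generalized 0-1 loss: `h ↦ R_p(h)` on `{0,…,K}` attains its
minimum uniquely at `h* = #{k ∈ {1,…,K} : π_k < p}`. -/
theorem stmt_0 (K : ℕ) (hK : 1 ≤ K) (pp : ℕ → ℝ)
    (hp1 : 0 < pp 1) (hpK : pp K < 1)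
    (hmono : ∀ k, 1 ≤ k → k < K → pp k < pp (k + 1))
    (p : ℝ) (hp0 : 0 ≤ p) (hple : p ≤ 1)
    (hne : ∀ k ∈ Finset.Icc 1 K, p ≠ pp k) :
    ∀ h ≤ K, h ≠ ((Finset.Icc 1 K).filter fun k => pp k < p).card →
      condRisk K pp p (((Finset.Icc 1 K).filter fun k => pp k < p).card)
        < condRisk K pp p h :=
  stmt_0_general K pp hmono p hne
end

section
/- Let φ⁺, φ⁻ : ℝ → ℝ be convex, let π ∈ (0,1) and δ ∈ ℝ. Assume φ⁺ is differentiable at δ and φ⁻ is differentiable at −δ, with φ⁺′(δ) < 0, φ⁻′(−δ) < 0, and φ⁻′(−δ)/(φ⁻′(−δ) + φ⁺′(δ)) = π. Then for every p ∈ [0,1]: if p > π, every global minimizer t* of Q_p over ℝ satisfies t* > δ; and if p < π, every global minimizer t* of Q_p over ℝ satisfies t* < δ. (Sufficiency direction of the consistency characterization: the surrogate-optimal margin value lies on the correct side of δ according to whether p exceeds π.) -/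
/-!
By the ratio condition, `Q_p` has derivative `(p - π) (φ⁻′(-δ) + φ⁺′(δ))` at `δ`, which is
negative for `p > π` and positive for `p < π`. A convex function lies above its tangent line, so a
global minimizer cannot lie on the side of `δ` where `Q_p` increases, and it cannot be `δ`
itself because the derivative there is nonzero.
-/

/-- Conditional surrogate risk `Q_p(t) = p·φ⁺(t) + (1−p)·φ⁻(−t)`. -/
noncomputable def condSurrRisk (φp φm : ℝ → ℝ) (p t : ℝ) : ℝ :=
  p * φp t + (1 - p) * φm (-t)

open Set

theorem ConvexOn.add_mul_sub_le_of_hasDerivAt {S : Set ℝ} {f : ℝ → ℝ} {f' x y : ℝ}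
    (hf : ConvexOn ℝ S f) (hx : x ∈ S) (hy : y ∈ S) (hd : HasDerivAt f f' x) :
    f x + f' * (y - x) ≤ f y := by
  rcases lt_trichotomy y x with hyx | rfl | hxy
  · have h := hf.slope_le_of_hasDerivAt hy hx hyx hd
    rw [slope_def_field, div_le_iff₀ (sub_pos.2 hyx)] at h
    linarith
  · simp
  · have h := hf.le_slope_of_hasDerivAt hx hy hxy hd
    rw [slope_def_field, le_div_iff₀ (sub_pos.2 hxy)] at h
    linarith

theorem ConvexOn.mul_sub_neg_of_isMinOn {f : ℝ → ℝ} {f' x t : ℝ}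
    (hf : ConvexOn ℝ univ f) (hd : HasDerivAt f f' x) (hf' : f' ≠ 0)
    (ht : IsMinOn f univ t) : f' * (t - x) < 0 := by
  have htx : t ≠ x := by
    rintro rfl
    exact hf' ((ht.isLocalMin Filter.univ_mem).hasDerivAt_eq_zero hd)
  refine (mul_ne_zero hf' (sub_ne_zero.2 htx)).lt_of_le ?_
  linarith [hf.add_mul_sub_le_of_hasDerivAt (mem_univ x) (mem_univ t) hd,
    isMinOn_univ_iff.1 ht x]

theorem ConvexOn.comp_neg {E : Type*} [AddCommGroup E] [Module ℝ E] {f : E → ℝ}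
    (hf : ConvexOn ℝ univ f) : ConvexOn ℝ univ fun x ↦ f (-x) :=
  hf.comp_linearMap (-LinearMap.id)

theorem convexOn_condSurrRisk {φp φm : ℝ → ℝ} (hφp : ConvexOn ℝ univ φp)
    (hφm : ConvexOn ℝ univ φm) {p : ℝ} (hp0 : 0 ≤ p) (hp1 : p ≤ 1) :
    ConvexOn ℝ univ (condSurrRisk φp φm p) :=
  (hφp.smul hp0).add (hφm.comp_neg.smul (sub_nonneg.2 hp1))

theorem hasDerivAt_condSurrRisk {φp φm : ℝ → ℝ} {dp dm δ : ℝ} (hdp : HasDerivAt φp dp δ)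
    (hdm : HasDerivAt φm dm (-δ)) (p : ℝ) :
    HasDerivAt (condSurrRisk φp φm p) (p * dp - (1 - p) * dm) δ := by
  have hneg : HasDerivAt (fun t ↦ φm (-t)) (-dm) δ := by
    simpa [Function.comp_def] using hdm.comp δ (hasDerivAt_neg δ)
  rw [sub_eq_add_neg, ← mul_neg]
  exact (hdp.const_mul p).add (hneg.const_mul (1 - p))

theorem stmt_3_general (φp φm : ℝ → ℝ)
    (hφp : ConvexOn ℝ Set.univ φp) (hφm : ConvexOn ℝ Set.univ φm)
    (π δ : ℝ)
    (dp dm : ℝ) (hdp : HasDerivAt φp dp δ) (hdm : HasDerivAt φm dm (-δ))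
    (hdp0 : dp < 0) (hdm0 : dm < 0) (hratio : dm / (dm + dp) = π)
    (p : ℝ) (hp0 : 0 ≤ p) (hp1 : p ≤ 1) :
    (π < p → ∀ t : ℝ,
      (∀ u : ℝ, condSurrRisk φp φm p t ≤ condSurrRisk φp φm p u) → δ < t)
    ∧ (p < π → ∀ t : ℝ,
      (∀ u : ℝ, condSurrRisk φp φm p t ≤ condSurrRisk φp φm p u) → t < δ) := by
  have hsum : dm + dp < 0 := by linarith
  have hQ' : HasDerivAt (condSurrRisk φp φm p) ((p - π) * (dm + dp)) δ := by
    convert hasDerivAt_condSurrRisk hdp hdm p using 1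
    rw [← hratio]
    field_simp [hsum.ne]
    ring
  have hmin : ∀ t, (∀ u, condSurrRisk φp φm p t ≤ condSurrRisk φp φm p u) → p ≠ π →
      (p - π) * (dm + dp) * (t - δ) < 0 := fun t ht hpπ ↦
    (convexOn_condSurrRisk hφp hφm hp0 hp1).mul_sub_neg_of_isMinOn hQ'
      (mul_ne_zero (sub_ne_zero.2 hpπ) hsum.ne) fun u _ ↦ ht u
  refine ⟨fun hπp t ht ↦ ?_, fun hpπ t ht ↦ ?_⟩
  · have hneg : (p - π) * (dm + dp) < 0 := mul_neg_of_pos_of_neg (sub_pos.2 hπp) hsum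
    linarith [pos_of_mul_neg_right (hmin t ht hπp.ne') hneg.le]
  · have hpos : 0 < (p - π) * (dm + dp) := mul_pos_of_neg_of_neg (sub_neg.2 hpπ) hsum
    linarith [neg_of_mul_neg_right (hmin t ht hpπ.ne) hpos.le]

/-- Sufficiency direction of the consistency characterization: if convex surrogates `φ⁺, φ⁻`
satisfy the derivative conditions at `(π, δ)`, then for `p > π` every global minimizer of
`Q_p` lies strictly to the right of `δ`, and for `p < π` strictly to the left. -/
theorem stmt_3 (φp φm : ℝ → ℝ)
    (hφp : ConvexOn ℝ Set.univ φp) (hφm : ConvexOn ℝ Set.univ φm)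
    (π δ : ℝ) (hπ0 : 0 < π) (hπ1 : π < 1)
    (dp dm : ℝ) (hdp : HasDerivAt φp dp δ) (hdm : HasDerivAt φm dm (-δ))
    (hdp0 : dp < 0) (hdm0 : dm < 0) (hratio : dm / (dm + dp) = π)
    (p : ℝ) (hp0 : 0 ≤ p) (hp1 : p ≤ 1) :
    (π < p → ∀ t : ℝ,
      (∀ u : ℝ, condSurrRisk φp φm p t ≤ condSurrRisk φp φm p u) → δ < t)
    ∧ (p < π → ∀ t : ℝ,
      (∀ u : ℝ, condSurrRisk φp φm p t ≤ condSurrRisk φp φm p u) → t < δ) :=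
  stmt_3_general φp φm hφp hφm π δ dp dm hdp hdm hdp0 hdm0 hratio p hp0 hp1
end

section
/- Suppose conditions (C1)–(C3) hold for the piecewise linear surrogates φ⁺, φ⁻. Then: (i) for each k ∈ {1,…,K}, the open interval (H_{k−1}, H_k) is nonempty, and for every x ∈ (H_{k−1}, H_k), φ⁺ is differentiable at x with φ⁺′(x) = B⁺_k < 0, φ⁻ is differentiable at −x with φ⁻′(−x) = B⁻_k < 0, and φ⁻′(−x)/(φ⁻′(−x) + φ⁺′(x)) = π_k; and (ii) (minimal consistency) for every x ∈ ℝ such that φ⁺ is differentiable at x with φ⁺′(x) < 0 and φ⁻ is differentiable at −x with φ⁻′(−x) < 0, the ratio φ⁻′(−x)/(φ⁻′(−x) + φ⁺′(x)) equals π_k for some k ∈ {1,…,K}. In particular, φ⁺, φ⁻ are consistent exactly for the boundaries π_1, …, π_K and for no other boundary value in (0,1). -/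
/-!
Both surrogates are upper envelopes of lines. By (C1)–(C2) the consecutive lines of `φ⁺`
cross at the hinges `H k`, and so do those of `z ↦ φ⁻ (-z)`, whose slopes `-B⁻_k` increase,
because `H⁻_k = -H_k`. Hence on `[H (k-1), H k]` both envelopes follow their `k`-th line,
which stays nonnegative there: the last line of `φ⁺` vanishes at `H K`, the first line of
`z ↦ φ⁻ (-z)` at `H 0`. This gives (i). For (ii), `φ⁺` vanishes to the right of `H K` and
`z ↦ φ⁻ (-z)` to the left of `H 0`, so negative derivatives force `H 0 < x < H K`; at an
interior hinge the one-sided slopes of `φ⁺` differ, so `x` lies in an open piece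
`(H (k-1), H k)`, where the derivatives are `B±_k`.
-/

/-- Piecewise linear surrogate `φ(z) = max{0, max_{1≤k≤K} (A_k + B_k·z)}`. -/
noncomputable def phiPL (K : ℕ) (A B : ℕ → ℝ) (z : ℝ) : ℝ :=
  (Finset.Icc 1 K).fold max 0 fun k => A k + B k * z

open Set

section PiecewiseLinear

variable {K : ℕ} {a b : ℕ → ℝ} {z : ℝ}

theorem phiPL_eq_of_forall_le {k : ℕ} (hk : k ∈ Finset.Icc 1 K) (h0 : 0 ≤ a k + b k * z)
    (hmax : ∀ j ∈ Finset.Icc 1 K, a j + b j * z ≤ a k + b k * z) :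
    phiPL K a b z = a k + b k * z :=
  le_antisymm ((Finset.fold_max_le _).2 ⟨h0, hmax⟩)
    ((Finset.le_fold_max _).2 (Or.inr ⟨k, hk, le_rfl⟩))

theorem phiPL_eq_zero_of_forall_le (h : ∀ j ∈ Finset.Icc 1 K, a j + b j * z ≤ 0) :
    phiPL K a b z = 0 :=
  le_antisymm ((Finset.fold_max_le _).2 ⟨le_rfl, h⟩) ((Finset.le_fold_max _).2 (Or.inl le_rfl))

theorem phiPL_comp_neg : (fun z => phiPL K a b (-z)) = phiPL K a (-b) := by
  funext z
  simp only [phiPL, Pi.neg_apply, neg_mul_comm]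

theorem hasDerivAt_phiPL_neg_iff {d x : ℝ} :
    HasDerivAt (phiPL K a b) d (-x) ↔ HasDerivAt (phiPL K a (-b)) (-d) x := by
  have key : ∀ (b : ℕ → ℝ) (d y : ℝ), HasDerivAt (phiPL K a b) d (-y) →
      HasDerivAt (phiPL K a (-b)) (-d) y := fun b d y hd => by
    rw [← phiPL_comp_neg]
    simpa [Function.comp_def] using hd.comp y (hasDerivAt_neg y)
  refine ⟨key b d x, fun hd => ?_⟩
  simpa only [neg_neg] using key (-b) (-d) (-x) (by rwa [neg_neg])

end PiecewiseLinear

section Derivatives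

theorem hasDerivAt_affine (c m x : ℝ) : HasDerivAt (fun z => c + m * z) m x := by
  simpa using ((hasDerivAt_id x).const_mul m).const_add c

variable {f g : ℝ → ℝ} {d e x : ℝ}

theorem hasDerivAt_of_eqOn_affine {c m p q : ℝ} (heq : EqOn f (fun z => c + m * z) (Icc p q))
    (hx : x ∈ Ioo p q) : HasDerivAt f m x :=
  (hasDerivAt_affine c m x).congr_of_eventuallyEq
    (Filter.eventuallyEq_of_mem (Icc_mem_nhds hx.1 hx.2) heq)

theorem HasDerivAt.eq_of_eqOn_uIcc {y : ℝ} (hf : HasDerivAt f d x) (hg : HasDerivAt g e x)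
    (hxy : x ≠ y) (heq : EqOn f g (uIcc x y)) : d = e :=
  (uniqueDiffOn_uIcc hxy x left_mem_uIcc).eq_deriv _ hf.hasDerivWithinAt
    (hg.hasDerivWithinAt.congr_of_mem heq left_mem_uIcc)

theorem HasDerivAt.eq_zero_of_forall_ge (hf : HasDerivAt f d x) (h : ∀ z, x ≤ z → f z = 0) :
    d = 0 :=
  hf.eq_of_eqOn_uIcc (hasDerivAt_const x 0) (by linarith : x ≠ x + 1) fun z hz => by
    rw [uIcc_of_le (by linarith)] at hz
    exact h z hz.1

theorem HasDerivAt.eq_zero_of_forall_le (hf : HasDerivAt f d x) (h : ∀ z, z ≤ x → f z = 0) :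
    d = 0 :=
  hf.eq_of_eqOn_uIcc (hasDerivAt_const x 0) (by linarith : x ≠ x - 1) fun z hz => by
    rw [uIcc_of_ge (by linarith)] at hz
    exact h z hz.2

end Derivatives

theorem exists_hinge_sub_one_lt_le {K : ℕ} {H : ℕ → ℝ} {x : ℝ} (h0 : H 0 < x)
    (hK : x ≤ H K) : ∃ k ∈ Finset.Icc 1 K, H (k - 1) < x ∧ x ≤ H k := by
  classical
  have hex : ∃ k, x ≤ H k := ⟨K, hK⟩
  have hpos : Nat.find hex ≠ 0 := fun h => (Nat.find_spec hex).not_gt (h ▸ h0)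
  refine ⟨Nat.find hex,
    Finset.mem_Icc.2 ⟨Nat.one_le_iff_ne_zero.2 hpos, Nat.find_min' hex hK⟩,
    lt_of_not_ge (Nat.find_min hex (by omega)), Nat.find_spec hex⟩

/-- Only `H 1, …, H (K - 1)` are crossings of lines; `H 0` and `H K` merely extend the increasing
chain of hinges. -/
structure HingedLines (K : ℕ) (a b H : ℕ → ℝ) : Prop where
  slope_lt : ∀ n, 1 ≤ n → n < K → b n < b (n + 1)
  line_eq_at_hinge : ∀ n, 1 ≤ n → n < K → a (n + 1) + b (n + 1) * H n = a n + b n * H n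
  hinge_lt : ∀ n < K, H n < H (n + 1)

namespace HingedLines

variable {K : ℕ} {a b H : ℕ → ℝ} {j k n : ℕ} {z : ℝ}

theorem of_hinge_eq_div (hb : ∀ n, 1 ≤ n → n < K → b n < b (n + 1))
    (hH : ∀ n, 1 ≤ n → n ≤ K - 1 → H n = (a n - a (n + 1)) / (b (n + 1) - b n))
    (hH_lt : ∀ n < K, H n < H (n + 1)) : HingedLines K a b H where
  slope_lt := hb
  line_eq_at_hinge n hn hnK := by
    have := (sub_pos.2 (hb n hn hnK)).ne'
    rw [hH n hn (by omega)]
    field_simp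
    ring
  hinge_lt := hH_lt

theorem hinge_le (h : HingedLines K a b H) (hjk : j ≤ k) (hk : k ≤ K) : H j ≤ H k := by
  induction k, hjk using Nat.le_induction with
  | base => exact le_rfl
  | succ n _ ih => exact (ih (by omega)).trans (h.hinge_lt n (by omega)).le

theorem hinge_sub_one_lt (h : HingedLines K a b H) (hk : 1 ≤ k) (hkK : k ≤ K) :
    H (k - 1) < H k := by
  simpa [Nat.sub_add_cancel hk] using h.hinge_lt (k - 1) (by omega)

theorem slope_le (h : HingedLines K a b H) (hj : 1 ≤ j) (hjk : j ≤ k) (hk : k ≤ K) :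
    b j ≤ b k := by
  induction k, hjk using Nat.le_induction with
  | base => exact le_rfl
  | succ n hn ih => exact (ih (by omega)).trans (h.slope_lt n (hj.trans hn) (by omega)).le

theorem line_succ_sub_line (h : HingedLines K a b H) (hn : 1 ≤ n) (hnK : n < K) (z : ℝ) :
    a (n + 1) + b (n + 1) * z - (a n + b n * z) = (b (n + 1) - b n) * (z - H n) := by
  linear_combination h.line_eq_at_hinge n hn hnK

theorem line_le_line_succ (h : HingedLines K a b H) (hn : 1 ≤ n) (hnK : n < K) (hz : H n ≤ z) :
    a n + b n * z ≤ a (n + 1) + b (n + 1) * z := by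
  have := mul_nonneg (sub_nonneg.2 (h.slope_lt n hn hnK).le) (sub_nonneg.2 hz)
  linarith [h.line_succ_sub_line hn hnK z]

theorem line_succ_le_line (h : HingedLines K a b H) (hn : 1 ≤ n) (hnK : n < K) (hz : z ≤ H n) :
    a (n + 1) + b (n + 1) * z ≤ a n + b n * z := by
  have := mul_nonneg (sub_nonneg.2 (h.slope_lt n hn hnK).le) (sub_nonneg.2 hz)
  linarith [h.line_succ_sub_line hn hnK z]

theorem line_le_of_hinge_le (h : HingedLines K a b H) (hj : 1 ≤ j) (hjk : j ≤ k) (hk : k ≤ K)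
    (hz : H (k - 1) ≤ z) : a j + b j * z ≤ a k + b k * z := by
  induction k, hjk using Nat.le_induction with
  | base => exact le_rfl
  | succ n hn ih =>
    have hnz : H n ≤ z := by simpa using hz
    exact (ih (by omega) ((h.hinge_le (Nat.sub_le n 1) (by omega)).trans hnz)).trans
      (h.line_le_line_succ (hj.trans hn) (by omega) hnz)

theorem line_le_of_le_hinge (h : HingedLines K a b H) (hk : 1 ≤ k) (hkj : k ≤ j) (hj : j ≤ K)
    (hz : z ≤ H k) : a j + b j * z ≤ a k + b k * z := by
  induction j, hkj using Nat.le_induction with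
  | base => exact le_rfl
  | succ n hn ih =>
    have hnz : z ≤ H n := hz.trans (h.hinge_le hn (by omega))
    exact (h.line_succ_le_line (hk.trans hn) (by omega) hnz).trans (ih (by omega))

theorem line_le (h : HingedLines K a b H) (hj : j ∈ Finset.Icc 1 K) (hk : k ∈ Finset.Icc 1 K)
    (hz : z ∈ Icc (H (k - 1)) (H k)) : a j + b j * z ≤ a k + b k * z := by
  obtain ⟨hj1, hjK⟩ := Finset.mem_Icc.1 hj
  obtain ⟨hk1, hkK⟩ := Finset.mem_Icc.1 hk
  rcases le_total j k with hjk | hkj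
  · exact h.line_le_of_hinge_le hj1 hjk hkK hz.1
  · exact h.line_le_of_le_hinge hk1 hkj hjK hz.2

theorem eqOn_phiPL (h : HingedLines K a b H) (hk : k ∈ Finset.Icc 1 K)
    (h0 : ∀ z ∈ Icc (H (k - 1)) (H k), 0 ≤ a k + b k * z) :
    EqOn (phiPL K a b) (fun z => a k + b k * z) (Icc (H (k - 1)) (H k)) := fun z hz =>
  phiPL_eq_of_forall_le hk (h0 z hz) fun _ hj => h.line_le hj hk hz

theorem eqOn_phiPL_of_last (h : HingedLines K a b H) (hlast : a K + b K * H K = 0)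
    (hbK : b K ≤ 0) (hk : k ∈ Finset.Icc 1 K) :
    EqOn (phiPL K a b) (fun z => a k + b k * z) (Icc (H (k - 1)) (H k)) :=
  h.eqOn_phiPL hk fun z hz => by
    obtain ⟨hk1, hkK⟩ := Finset.mem_Icc.1 hk
    have hzK : z ≤ H K := hz.2.trans (h.hinge_le hkK le_rfl)
    have hK0 : 0 ≤ a K + b K * z := by
      nlinarith [mul_nonneg (neg_nonneg.2 hbK) (sub_nonneg.2 hzK)]
    exact hK0.trans (h.line_le_of_le_hinge hk1 hkK le_rfl hz.2)

theorem phiPL_eq_zero_of_last (h : HingedLines K a b H) (hlast : a K + b K * H K = 0)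
    (hbK : b K ≤ 0) (hz : H K ≤ z) : phiPL K a b z = 0 :=
  phiPL_eq_zero_of_forall_le fun j hj => by
    obtain ⟨hj1, hjK⟩ := Finset.mem_Icc.1 hj
    have hK0 : a K + b K * z ≤ 0 := by
      nlinarith [mul_nonneg (neg_nonneg.2 hbK) (sub_nonneg.2 hz)]
    exact (h.line_le_of_hinge_le hj1 hjK le_rfl
      ((h.hinge_le (Nat.sub_le K 1) le_rfl).trans hz)).trans hK0

theorem eqOn_phiPL_of_first (h : HingedLines K a b H) (hfirst : a 1 + b 1 * H 0 = 0)
    (hb1 : 0 ≤ b 1) (hk : k ∈ Finset.Icc 1 K) :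
    EqOn (phiPL K a b) (fun z => a k + b k * z) (Icc (H (k - 1)) (H k)) :=
  h.eqOn_phiPL hk fun z hz => by
    obtain ⟨hk1, hkK⟩ := Finset.mem_Icc.1 hk
    have h0z : H 0 ≤ z := (h.hinge_le (Nat.zero_le _) (by omega)).trans hz.1
    have h10 : 0 ≤ a 1 + b 1 * z := by nlinarith [mul_nonneg hb1 (sub_nonneg.2 h0z)]
    exact h10.trans (h.line_le_of_hinge_le le_rfl hk1 hkK hz.1)

theorem phiPL_eq_zero_of_first (h : HingedLines K a b H) (hfirst : a 1 + b 1 * H 0 = 0)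
    (hb1 : 0 ≤ b 1) (hz : z ≤ H 0) : phiPL K a b z = 0 :=
  phiPL_eq_zero_of_forall_le fun j hj => by
    obtain ⟨hj1, hjK⟩ := Finset.mem_Icc.1 hj
    have h10 : a 1 + b 1 * z ≤ 0 := by nlinarith [mul_nonneg hb1 (sub_nonneg.2 hz)]
    exact (h.line_le_of_le_hinge le_rfl hj1 hjK
      (hz.trans (h.hinge_le zero_le_one (hj1.trans hjK)))).trans h10

theorem exists_mem_Ioo_of_hasDerivAt (h : HingedLines K a b H)
    (heq : ∀ k ∈ Finset.Icc 1 K,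
      EqOn (phiPL K a b) (fun z => a k + b k * z) (Icc (H (k - 1)) (H k)))
    {d x : ℝ} (hd : HasDerivAt (phiPL K a b) d x) (h0 : H 0 < x) (hK : x < H K) :
    ∃ k ∈ Finset.Icc 1 K, x ∈ Ioo (H (k - 1)) (H k) := by
  obtain ⟨k, hk, hleft, hright⟩ := exists_hinge_sub_one_lt_le h0 hK.le
  rcases hright.lt_or_eq with hright | rfl
  · exact ⟨k, hk, hleft, hright⟩
  obtain ⟨hk1, hkK⟩ := Finset.mem_Icc.1 hk
  have hk_lt : k < K := lt_of_le_of_ne hkK (by rintro rfl; exact hK.false)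
  have hd_left : d = b k := hd.eq_of_eqOn_uIcc (hasDerivAt_affine _ _ _) hleft.ne'
    (by rw [uIcc_of_ge hleft.le]; exact heq k hk)
  have hd_right : d = b (k + 1) := hd.eq_of_eqOn_uIcc (hasDerivAt_affine _ _ _)
    (h.hinge_lt k hk_lt).ne (by
      rw [uIcc_of_le (h.hinge_lt k hk_lt).le]
      simpa using heq (k + 1) (Finset.mem_Icc.2 ⟨by omega, hk_lt⟩))
  exact absurd (hd_left.symm.trans hd_right) (h.slope_lt k hk1 hk_lt).ne

end HingedLines

theorem stmt_4_general (K : ℕ) (pp : ℕ → ℝ)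
    (Ap Bp Am Bm : ℕ → ℝ) (H Hm : ℕ → ℝ)
    -- hinge points
    (hH0 : H 0 = Am 1 / Bm 1)
    (hHmid : ∀ k, 1 ≤ k → k ≤ K - 1 → H k = (Ap k - Ap (k + 1)) / (Bp (k + 1) - Bp k))
    (hHK : H K = -Ap K / Bp K)
    (hHm : ∀ k, 1 ≤ k → k ≤ K - 1 → Hm k = (Am k - Am (k + 1)) / (Bm (k + 1) - Bm k))
    -- (C1)
    (hC1p : ∀ k, 1 ≤ k → k < K → Bp k < Bp (k + 1)) (hC1pK : Bp K < 0)
    (hC1m : ∀ k, 1 ≤ k → k < K → Bm (k + 1) < Bm k) (hC1m1 : Bm 1 < 0)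
    -- (C2)
    (hC2a : ∀ k, 1 ≤ k → k ≤ K - 1 → -Hm k = H k)
    (hC2b : ∀ k, k < K → H k < H (k + 1))
    -- (C3)
    (hC3 : ∀ k ∈ Finset.Icc 1 K, Bm k / (Bm k + Bp k) = pp k) :
    (∀ k ∈ Finset.Icc 1 K,
      H (k - 1) < H k ∧
      ∀ x ∈ Set.Ioo (H (k - 1)) (H k),
        HasDerivAt (phiPL K Ap Bp) (Bp k) x ∧ Bp k < 0 ∧
        HasDerivAt (phiPL K Am Bm) (Bm k) (-x) ∧ Bm k < 0 ∧
        Bm k / (Bm k + Bp k) = pp k)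
    ∧ (∀ (x dp dm : ℝ),
        HasDerivAt (phiPL K Ap Bp) dp x → dp < 0 →
        HasDerivAt (phiPL K Am Bm) dm (-x) → dm < 0 →
        ∃ k ∈ Finset.Icc 1 K, dm / (dm + dp) = pp k) := by
  have hP : HingedLines K Ap Bp H := .of_hinge_eq_div hC1p hHmid hC2b
  have hM : HingedLines K Am (-Bm) H :=
    .of_hinge_eq_div (fun n hn hnK => neg_lt_neg (hC1m n hn hnK))
    (fun n hn hnK => by
      rw [← hC2a n hn hnK, hHm n hn hnK, Pi.neg_apply, Pi.neg_apply, neg_sub_neg, ← div_neg,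
        neg_sub]) hC2b
  have hlast : Ap K + Bp K * H K = 0 := by
    rw [hHK, mul_div_cancel₀ _ hC1pK.ne, add_neg_cancel]
  have hfirst : Am 1 + (-Bm) 1 * H 0 = 0 := by
    rw [hH0, Pi.neg_apply, neg_mul, mul_div_cancel₀ _ hC1m1.ne, add_neg_cancel]
  have hb1 : 0 ≤ (-Bm) 1 := by simpa using hC1m1.le
  have eqP := fun k (hk : k ∈ Finset.Icc 1 K) => hP.eqOn_phiPL_of_last hlast hC1pK.le hk
  have eqM := fun k (hk : k ∈ Finset.Icc 1 K) => hM.eqOn_phiPL_of_first hfirst hb1 hk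
  have derivP := fun k hk x (hx : x ∈ Ioo (H (k - 1)) (H k)) =>
    hasDerivAt_of_eqOn_affine (eqP k hk) hx
  have derivM := fun k hk x (hx : x ∈ Ioo (H (k - 1)) (H k)) =>
    hasDerivAt_phiPL_neg_iff.2 (hasDerivAt_of_eqOn_affine (eqM k hk) hx)
  refine ⟨fun k hk => ?_, fun x dp dm hdp hdp_neg hdm hdm_neg => ?_⟩
  · obtain ⟨hk1, hkK⟩ := Finset.mem_Icc.1 hk
    have hBp : Bp k < 0 := (hP.slope_le hk1 hkK le_rfl).trans_lt hC1pK
    have hBm : Bm k < 0 := by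
      simpa using hC1m1.trans_le' (neg_le_neg_iff.1 (hM.slope_le le_rfl hk1 hkK))
    exact ⟨hP.hinge_sub_one_lt hk1 hkK, fun x hx =>
      ⟨derivP k hk x hx, hBp, by simpa using derivM k hk x hx, hBm, hC3 k hk⟩⟩
  have hxK : x < H K := lt_of_not_ge fun hx => hdp_neg.ne
    (hdp.eq_zero_of_forall_ge fun z hz => hP.phiPL_eq_zero_of_last hlast hC1pK.le (hx.trans hz))
  have hx0 : H 0 < x := lt_of_not_ge fun hx => (neg_pos.2 hdm_neg).ne'
    ((hasDerivAt_phiPL_neg_iff.1 hdm).eq_zero_of_forall_le fun z hz =>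
      hM.phiPL_eq_zero_of_first hfirst hb1 (hz.trans hx))
  obtain ⟨k, hk, hx⟩ := hP.exists_mem_Ioo_of_hasDerivAt eqP hdp hx0 hxK
  have hdp_eq : dp = Bp k := hdp.unique (derivP k hk x hx)
  have hdm_eq : dm = Bm k := hdm.unique (by simpa using derivM k hk x hx)
  exact ⟨k, hk, by rw [hdp_eq, hdm_eq, hC3 k hk]⟩

/-- Under conditions (C1)-(C3), the piecewise linear surrogates are minimally consistent:
(i) on each open interval `(H_{k−1}, H_k)` both losses are differentiable with negative
slopes whose ratio equals `π_k`; (ii) wherever both derivatives exist and are negative,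
the ratio `φ⁻′(−x)/(φ⁻′(−x) + φ⁺′(x))` equals `π_k` for some `k ∈ {1,…,K}`. -/
theorem stmt_4 (K : ℕ) (hK : 1 ≤ K) (pp : ℕ → ℝ)
    (hpp0 : 0 < pp 1) (hppK : pp K < 1)
    (hppmono : ∀ k, 1 ≤ k → k < K → pp k < pp (k + 1))
    (Ap Bp Am Bm : ℕ → ℝ) (H Hm : ℕ → ℝ)
    -- hinge points
    (hH0 : H 0 = Am 1 / Bm 1)
    (hHmid : ∀ k, 1 ≤ k → k ≤ K - 1 → H k = (Ap k - Ap (k + 1)) / (Bp (k + 1) - Bp k))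
    (hHK : H K = -Ap K / Bp K)
    (hHm : ∀ k, 1 ≤ k → k ≤ K - 1 → Hm k = (Am k - Am (k + 1)) / (Bm (k + 1) - Bm k))
    -- (C1)
    (hC1p : ∀ k, 1 ≤ k → k < K → Bp k < Bp (k + 1)) (hC1pK : Bp K < 0)
    (hC1m : ∀ k, 1 ≤ k → k < K → Bm (k + 1) < Bm k) (hC1m1 : Bm 1 < 0)
    -- (C2)
    (hC2a : ∀ k, 1 ≤ k → k ≤ K - 1 → -Hm k = H k)
    (hC2b : ∀ k, k < K → H k < H (k + 1))
    -- (C3)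
    (hC3 : ∀ k ∈ Finset.Icc 1 K, Bm k / (Bm k + Bp k) = pp k) :
    (∀ k ∈ Finset.Icc 1 K,
      H (k - 1) < H k ∧
      ∀ x ∈ Set.Ioo (H (k - 1)) (H k),
        HasDerivAt (phiPL K Ap Bp) (Bp k) x ∧ Bp k < 0 ∧
        HasDerivAt (phiPL K Am Bm) (Bm k) (-x) ∧ Bm k < 0 ∧
        Bm k / (Bm k + Bp k) = pp k)
    ∧ (∀ (x dp dm : ℝ),
        HasDerivAt (phiPL K Ap Bp) dp x → dp < 0 →
        HasDerivAt (phiPL K Am Bm) dm (-x) → dm < 0 →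
        ∃ k ∈ Finset.Icc 1 K, dm / (dm + dp) = pp k) :=
  stmt_4_general K pp Ap Bp Am Bm H Hm hH0 hHmid hHK hHm hC1p hC1pK hC1m hC1m1 hC2a hC2b hC3
end

section
/- Fix an integer K ≥ 1 and 0 < π_1 < ⋯ < π_K < 1. For every p ∈ [0,1] and every h ∈ {0,…,K}, with h* = #{k ∈ {1,…,K} : π_k < p}, the excess conditional risk of the generalized 0–1 loss satisfies the exact identity R_p(h) − R_p(h*) = (2/K)·Σ_{k ∈ S} |p − π_k|, where S = {k : min(h,h*) < k ≤ max(h,h*)} (so S = ∅ and the excess risk is 0 when h = h*). -/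
/-!
Moving the prediction from `a` to `b ≥ a` changes the risk by `(2/K) Σ_{a<k≤b} (p - π_k)`, a sum
of terms whose sign is that of `p - π_k`. Since `π` is increasing, `π_k < p` holds exactly for
`k ≤ h*`, so every term between `h` and `h*` has the sign that makes it `|p - π_k|`.
-/

open Finset

lemma condRisk_sub_condRisk_of_le {K : ℕ} (pp : ℕ → ℝ) (p : ℝ) {a b : ℕ} (hab : a ≤ b)
    (hbK : b ≤ K) :
    condRisk K pp p a - condRisk K pp p b = 2 / K * ∑ k ∈ Ioc a b, (p - pp k) := by
  have hIcc_one (n : ℕ) : Icc 1 n = Ioc 0 n := Icc_add_one_left_eq_Ioc 0 n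
  simp only [condRisk, Icc_add_one_left_eq_Ioc, hIcc_one]
  rw [← sum_Ioc_consecutive _ hab hbK, ← sum_Ioc_consecutive _ (Nat.zero_le a) hab]
  have hterm : ∑ k ∈ Ioc a b, (p - pp k)
      = p * ∑ k ∈ Ioc a b, (1 - pp k) - (1 - p) * ∑ k ∈ Ioc a b, pp k := by
    rw [mul_sum, mul_sum, ← sum_sub_distrib]
    exact sum_congr rfl fun k _ => by ring
  rw [hterm]
  ring

section Threshold

variable {β : Type*} [Preorder β] [DecidableLT β] {K : ℕ} {f : ℕ → β}

lemma filter_lt_eq_Icc_card (hf : MonotoneOn f (Set.Icc 1 K)) (p : β) :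
    {k ∈ Icc 1 K | f k < p} = Icc 1 #{k ∈ Icc 1 K | f k < p} := by
  set F := {k ∈ Icc 1 K | f k < p}
  refine eq_of_subset_of_card_le (fun k hk => ?_) (by simp)
  obtain ⟨hkK, hkp⟩ := mem_filter.1 hk
  rw [mem_Icc] at hkK
  have hIcc : Icc 1 k ⊆ F := fun j hj => by
    rw [mem_Icc] at hj
    have hjK : j ∈ Set.Icc 1 K := ⟨hj.1, hj.2.trans hkK.2⟩
    exact mem_filter.2 ⟨mem_Icc.2 hjK, (hf hjK hkK hj.2).trans_lt hkp⟩
  exact mem_Icc.2 ⟨hkK.1, by simpa using card_le_card hIcc⟩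

lemma lt_iff_le_card_filter_lt (hf : MonotoneOn f (Set.Icc 1 K)) (p : β) {k : ℕ}
    (hk : k ∈ Icc 1 K) : f k < p ↔ k ≤ #{k ∈ Icc 1 K | f k < p} := by
  calc f k < p ↔ k ∈ {k ∈ Icc 1 K | f k < p} := by rw [mem_filter, and_iff_right hk]
    _ ↔ k ∈ Icc 1 #{k ∈ Icc 1 K | f k < p} :=
      Iff.of_eq (congrArg (k ∈ ·) (filter_lt_eq_Icc_card hf p))
    _ ↔ k ≤ #{k ∈ Icc 1 K | f k < p} := by rw [mem_Icc, and_iff_right (mem_Icc.1 hk).1]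

end Threshold

theorem stmt_7_general (K : ℕ) (pp : ℕ → ℝ)
    (hmono : ∀ k, 1 ≤ k → k < K → pp k < pp (k + 1))
    (p : ℝ)
    (h : ℕ) (hhK : h ≤ K) :
    condRisk K pp p h
        - condRisk K pp p (((Finset.Icc 1 K).filter fun k => pp k < p).card)
      = (2 / K) * ∑ k ∈ Finset.Ioc
          (min h (((Finset.Icc 1 K).filter fun k => pp k < p).card))
          (max h (((Finset.Icc 1 K).filter fun k => pp k < p).card)), |p - pp k| := by
  have hpp : MonotoneOn pp (Set.Icc 1 K) :=
    monotoneOn_of_le_succ Set.ordConnected_Icc fun k _ hk hk1 =>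
      (hmono k hk.1 (Nat.succ_le_iff.1 hk1.2)).le
  set m := #{k ∈ Icc 1 K | pp k < p}
  have hmK : m ≤ K := (card_filter_le _ _).trans (by simp)
  have hthreshold {k : ℕ} (h1 : 1 ≤ k) (hkK : k ≤ K) : pp k < p ↔ k ≤ m :=
    lt_iff_le_card_filter_lt hpp p (mem_Icc.2 ⟨h1, hkK⟩)
  rcases le_total h m with hhm | hmh
  · rw [min_eq_left hhm, max_eq_right hhm, condRisk_sub_condRisk_of_le pp p hhm hmK]
    refine congrArg _ (sum_congr rfl fun k hk => ?_)
    obtain ⟨hhk, hkm⟩ := mem_Ioc.1 hk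
    have hkp : pp k < p := (hthreshold (by omega) (hkm.trans hmK)).2 hkm
    exact (abs_of_pos (sub_pos.2 hkp)).symm
  · rw [min_eq_right hmh, max_eq_left hmh, ← neg_sub, condRisk_sub_condRisk_of_le pp p hmh hhK,
      ← mul_neg, ← sum_neg_distrib]
    refine congrArg _ (sum_congr rfl fun k hk => ?_)
    obtain ⟨hmk, hkh⟩ := mem_Ioc.1 hk
    have hpk : ¬ pp k < p := mt (hthreshold (by omega) (hkh.trans hhK)).1 (not_le.2 hmk)
    exact (abs_of_nonpos (sub_nonpos.2 (not_lt.1 hpk))).symm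

/-- Exact excess-risk identity for the generalized 0-1 loss: with
`h* = #{k ∈ {1,…,K} : π_k < p}`, for every `h ∈ {0,…,K}`,
`R_p(h) − R_p(h*) = (2/K)·Σ_{k ∈ S} |p − π_k|` where `S = (min(h,h*), max(h,h*)]`. -/
theorem stmt_7 (K : ℕ) (hK : 1 ≤ K) (pp : ℕ → ℝ)
    (hp1 : 0 < pp 1) (hpK : pp K < 1)
    (hmono : ∀ k, 1 ≤ k → k < K → pp k < pp (k + 1))
    (p : ℝ) (hp0 : 0 ≤ p) (hple : p ≤ 1)
    (h : ℕ) (hhK : h ≤ K) :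
    condRisk K pp p h
        - condRisk K pp p (((Finset.Icc 1 K).filter fun k => pp k < p).card)
      = (2 / K) * ∑ k ∈ Finset.Ioc
          (min h (((Finset.Icc 1 K).filter fun k => pp k < p).card))
          (max h (((Finset.Icc 1 K).filter fun k => pp k < p).card)), |p - pp k| :=
  stmt_7_general K pp hmono p h hhK
end

section
/- Suppose conditions (C1)–(C3) hold for the piecewise linear surrogates φ⁺, φ⁻, and let δ_1 < ⋯ < δ_K satisfy H_{k−1} < δ_k < H_k for each k ∈ {1,…,K}. Then the pointwise comparison inequality holds with exponent s = 1 and constant C = max{ −π_k/(B⁻_k·|δ_k − H_j|) : 1 ≤ k ≤ K, 0 ≤ j ≤ K }: namely, for every p ∈ [0,1] and every k ∈ {1,…,K}, |p − π_k| ≤ C·( Q_p(δ_k) − Q_p(t*_p) ). -/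
open Set

theorem monotoneOn_nat_Icc_of_le_succ {β : Type*} [Preorder β] {f : ℕ → β} {a b : ℕ}
    (hf : ∀ n, a ≤ n → n < b → f n ≤ f (n + 1)) : MonotoneOn f (Icc a b) :=
  monotoneOn_of_le_succ ordConnected_Icc fun n _ hn hsn => by
    rw [Order.succ_eq_add_one] at hsn ⊢
    exact hf n hn.1 hsn.2

theorem antitoneOn_nat_Icc_of_succ_le {β : Type*} [Preorder β] {f : ℕ → β} {a b : ℕ}
    (hf : ∀ n, a ≤ n → n < b → f (n + 1) ≤ f n) : AntitoneOn f (Icc a b) :=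
  monotoneOn_nat_Icc_of_le_succ (β := βᵒᵈ) hf

theorem add_mul_eq_add_mul_of_eq_div {a a' b b' h : ℝ} (hb : b ≠ b')
    (hh : h = (a - a') / (b' - b)) : a + b * h = a' + b' * h := by
  rw [hh]
  field_simp [sub_ne_zero.2 hb.symm]
  ring

theorem phiPL_neg (K : ℕ) (A B : ℕ → ℝ) (z : ℝ) :
    phiPL K A B (-z) = phiPL K A (fun l => -B l) z := by
  simp only [phiPL, neg_mul, mul_neg]

theorem isMaxOn_piece_of_mem_Icc {K : ℕ} {A B H : ℕ → ℝ} (hB : MonotoneOn B (Icc 1 K))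
    (hH : MonotoneOn H (Icc 0 K))
    (hcross : ∀ l, 1 ≤ l → l < K → A l + B l * H l = A (l + 1) + B (l + 1) * H l)
    {i : ℕ} (hi : i ∈ Icc 1 K) {z : ℝ} (hz : z ∈ Icc (H (i - 1)) (H i)) :
    IsMaxOn (fun l => A l + B l * z) (Icc 1 K) i := by
  obtain ⟨hi1, hiK⟩ := hi
  have hstep : ∀ l, 1 ≤ l → l < K →
      A (l + 1) + B (l + 1) * z - (A l + B l * z) = (B (l + 1) - B l) * (z - H l) ∧
      0 ≤ B (l + 1) - B l := fun l h1 h2 =>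
    ⟨by linear_combination -hcross l h1 h2,
      sub_nonneg.2 (hB ⟨h1, h2.le⟩ ⟨by omega, h2⟩ (Nat.le_succ l))⟩
  refine isMaxOn_Icc_of_mono_anti (monotoneOn_nat_Icc_of_le_succ fun l h1 hl => ?_)
    (antitoneOn_nat_Icc_of_succ_le fun l hl h2 => ?_)
  · obtain ⟨hdiff, hB⟩ := hstep l h1 (by omega)
    have hHl : H l ≤ z :=
      (hH ⟨l.zero_le, by omega⟩ ⟨(i - 1).zero_le, by omega⟩ (by omega)).trans hz.1
    nlinarith [mul_nonneg hB (sub_nonneg.2 hHl)]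
  · obtain ⟨hdiff, hB⟩ := hstep l (by omega) h2
    have hHl : z ≤ H l := hz.2.trans (hH ⟨i.zero_le, hiK⟩ ⟨l.zero_le, h2.le⟩ hl)
    nlinarith [mul_nonpos_of_nonneg_of_nonpos hB (sub_nonpos.2 hHl)]

theorem phiPL_eq_of_isMaxOn {K : ℕ} {A B : ℕ → ℝ} {z : ℝ} {i j : ℕ} (hi : i ∈ Icc 1 K)
    (hmax : IsMaxOn (fun l => A l + B l * z) (Icc 1 K) i) (hj : j ∈ Icc 1 K)
    (hj0 : 0 ≤ A j + B j * z) : phiPL K A B z = A i + B i * z := by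
  refine le_antisymm ((Finset.fold_max_le _).2 ⟨hj0.trans (hmax hj), fun l hl => ?_⟩)
    ((Finset.le_fold_max _).2 (Or.inr ⟨i, Finset.mem_Icc.2 hi, le_rfl⟩))
  exact hmax (Finset.mem_Icc.1 hl)

theorem condSurrRisk_sub_eq_of_mem_Icc {K : ℕ} {pp Ap Bp Am Bm H Hm : ℕ → ℝ}
    (hBp : MonotoneOn Bp (Icc 1 K)) (hBm : AntitoneOn Bm (Icc 1 K)) (hH : MonotoneOn H (Icc 0 K))
    (hH0 : H 0 = Am 1 / Bm 1)
    (hHmid : ∀ k, 1 ≤ k → k ≤ K - 1 → H k = (Ap k - Ap (k + 1)) / (Bp (k + 1) - Bp k))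
    (hHK : H K = -Ap K / Bp K)
    (hHm : ∀ k, 1 ≤ k → k ≤ K - 1 → Hm k = (Am k - Am (k + 1)) / (Bm (k + 1) - Bm k))
    (hC1p : ∀ k, 1 ≤ k → k < K → Bp k < Bp (k + 1)) (hC1pK : Bp K < 0)
    (hC1m : ∀ k, 1 ≤ k → k < K → Bm (k + 1) < Bm k) (hC1m1 : Bm 1 < 0)
    (hC2a : ∀ k, 1 ≤ k → k ≤ K - 1 → -Hm k = H k)
    {i : ℕ} (hi : i ∈ Icc 1 K) (hC3 : Bm i / (Bm i + Bp i) = pp i) (p : ℝ)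
    {z w : ℝ} (hz : z ∈ Icc (H (i - 1)) (H i)) (hw : w ∈ Icc (H (i - 1)) (H i)) :
    condSurrRisk (phiPL K Ap Bp) (phiPL K Am Bm) p w
      - condSurrRisk (phiPL K Ap Bp) (phiPL K Am Bm) p z
      = (Bm i + Bp i) * (p - pp i) * (w - z) := by
  obtain ⟨hi1, hiK⟩ := id hi
  have hK : 1 ≤ K := hi1.trans hiK
  have hcross_p : ∀ l, 1 ≤ l → l < K → Ap l + Bp l * H l = Ap (l + 1) + Bp (l + 1) * H l :=
    fun l h1 h2 => add_mul_eq_add_mul_of_eq_div (hC1p l h1 h2).ne (hHmid l h1 (by omega))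
  have hcross_m : ∀ l, 1 ≤ l → l < K →
      Am l + -Bm l * H l = Am (l + 1) + -Bm (l + 1) * H l := fun l h1 h2 => by
    have := add_mul_eq_add_mul_of_eq_div (hC1m l h1 h2).ne' (hHm l h1 (by omega))
    rw [← hC2a l h1 (by omega)]
    linear_combination this
  have hHK0 : Ap K + Bp K * H K = 0 := by
    rw [hHK]
    field_simp [hC1pK.ne]
    ring
  have hH00 : Am 1 + -Bm 1 * H 0 = 0 := by
    rw [hH0]
    field_simp [hC1m1.ne]
    ring
  have hpiece : ∀ x ∈ Icc (H (i - 1)) (H i), condSurrRisk (phiPL K Ap Bp) (phiPL K Am Bm) p x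
      = p * (Ap i + Bp i * x) + (1 - p) * (Am i + -Bm i * x) := by
    intro x hx
    have hxK : x ≤ H K := hx.2.trans (hH ⟨i.zero_le, hiK⟩ ⟨K.zero_le, le_rfl⟩ hiK)
    have hx0 : H 0 ≤ x :=
      (hH ⟨le_rfl, K.zero_le⟩ ⟨(i - 1).zero_le, by omega⟩ (i - 1).zero_le).trans hx.1
    rw [condSurrRisk, phiPL_neg,
      phiPL_eq_of_isMaxOn hi (isMaxOn_piece_of_mem_Icc hBp hH hcross_p hi hx) ⟨hK, le_rfl⟩
        (by nlinarith),
      phiPL_eq_of_isMaxOn hi (isMaxOn_piece_of_mem_Icc hBm.neg hH hcross_m hi hx) ⟨le_rfl, hK⟩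
        (by nlinarith)]
  have hsum : Bm i + Bp i ≠ 0 := by
    have := hBp hi ⟨hK, le_rfl⟩ hiK
    have := hBm ⟨le_rfl, hK⟩ hi hi1
    linarith
  rw [hpiece w hw, hpiece z hz, ← hC3]
  field_simp
  ring

theorem exists_optimal_eq_H {K : ℕ} (hK : 1 ≤ K) {pp H : ℕ → ℝ} {tst : ℝ → ℝ}
    (hpp : MonotoneOn pp (Icc 1 K))
    (htst0 : ∀ p : ℝ, p ≤ pp 1 → tst p = H 0)
    (htstmid : ∀ p : ℝ, ∀ k, 1 ≤ k → k ≤ K - 1 → pp k < p → p ≤ pp (k + 1) → tst p = H k)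
    (htstK : ∀ p : ℝ, pp K < p → tst p = H K) (p : ℝ) :
    ∃ j ≤ K, tst p = H j ∧ (∀ i, 1 ≤ i → i ≤ j → pp i < p) ∧ (∀ i, j < i → i ≤ K → p ≤ pp i) := by
  classical
  obtain ⟨j, hj⟩ : ∃ j, Nat.findGreatest (fun i => pp i < p) K = j := ⟨_, rfl⟩
  have hjK : j ≤ K := hj ▸ Nat.findGreatest_le K
  have hlow : ∀ i, 1 ≤ i → i ≤ j → pp i < p := fun i hi hij =>
    (hpp ⟨hi, hij.trans hjK⟩ ⟨hi.trans hij, hjK⟩ hij).trans_lt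
      (Nat.findGreatest_of_ne_zero hj (by omega))
  have hhigh : ∀ i, j < i → i ≤ K → p ≤ pp i := fun i hji hiK =>
    not_lt.1 (Nat.findGreatest_is_greatest (hj ▸ hji) hiK)
  refine ⟨j, hjK, ?_, hlow, hhigh⟩
  rcases Nat.eq_zero_or_pos j with rfl | hj1
  · exact htst0 p (hhigh 1 one_pos hK)
  rcases hjK.lt_or_eq with hjK | rfl
  · exact htstmid p j hj1 (by omega) (hlow j hj1 le_rfl) (hhigh (j + 1) (by omega) hjK)
  · exact htstK p (hlow j hj1 le_rfl)

theorem isMinOn_comp_of_slope {f : ℝ → ℝ} {H s π : ℕ → ℝ} {K j : ℕ} {p : ℝ} (hjK : j ≤ K)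
    (hH : MonotoneOn H (Icc 0 K)) (hs : ∀ i ∈ Icc 1 K, s i ≤ 0)
    (hf : ∀ i ∈ Icc 1 K, ∀ z ∈ Icc (H (i - 1)) (H i), ∀ w ∈ Icc (H (i - 1)) (H i),
      f w - f z = s i * (p - π i) * (w - z))
    (hlow : ∀ i, 1 ≤ i → i ≤ j → π i < p) (hhigh : ∀ i, j < i → i ≤ K → p ≤ π i) :
    IsMinOn (f ∘ H) (Icc 0 K) j := by
  have hstep : ∀ n < K, f (H (n + 1)) - f (H n) = s (n + 1) * (p - π (n + 1)) * (H (n + 1) - H n)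
      ∧ s (n + 1) ≤ 0 ∧ 0 ≤ H (n + 1) - H n := fun n hn =>
    have hHn : H n ≤ H (n + 1) := hH ⟨n.zero_le, hn.le⟩ ⟨(n + 1).zero_le, hn⟩ n.le_succ
    ⟨hf (n + 1) ⟨by omega, hn⟩ _ ⟨le_rfl, hHn⟩ _ ⟨hHn, le_rfl⟩, hs (n + 1) ⟨by omega, hn⟩,
      sub_nonneg.2 hHn⟩
  refine isMinOn_Icc_of_anti_mono (antitoneOn_nat_Icc_of_succ_le fun n _ hn => ?_)
    (monotoneOn_nat_Icc_of_le_succ fun n hn hnK => ?_)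
  · obtain ⟨hdiff, hsn, hΔH⟩ := hstep n (by omega)
    have hslope : s (n + 1) * (p - π (n + 1)) ≤ 0 :=
      mul_nonpos_of_nonpos_of_nonneg hsn (sub_nonneg.2 (hlow (n + 1) (by omega) hn).le)
    have := mul_nonpos_of_nonpos_of_nonneg hslope hΔH
    simp only [Function.comp_apply]
    linarith
  · obtain ⟨hdiff, hsn, hΔH⟩ := hstep n hnK
    have hslope : 0 ≤ s (n + 1) * (p - π (n + 1)) :=
      mul_nonneg_of_nonpos_of_nonpos hsn (sub_nonpos.2 (hhigh (n + 1) (by omega) hnK))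
    have := mul_nonneg hslope hΔH
    simp only [Function.comp_apply]
    linarith

theorem abs_sub_le_mul_of_slope_le {bm bp π p d Δ C : ℝ} (hbm : bm < 0) (hsum : bm + bp < 0)
    (hπ : bm / (bm + bp) = π) (hd : d ≠ 0) (hsign : (p - π) * d ≤ 0)
    (hΔ : (bm + bp) * (p - π) * d ≤ Δ) (hC : -π / (bm * |d|) ≤ C) : |p - π| ≤ C * Δ := by
  have hc : 0 ≤ -π / (bm * |d|) :=
    div_nonneg_of_nonpos (neg_nonpos.2 (hπ ▸ div_nonneg_of_nonpos hbm.le hsum.le))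
      (mul_nonpos_of_nonpos_of_nonneg hbm.le (abs_nonneg d))
  have hX : 0 ≤ (bm + bp) * (p - π) * d := by
    rw [mul_assoc]
    exact mul_nonneg_of_nonpos_of_nonpos hsum.le hsign
  have hπ' : π * (bm + bp) = bm := hπ ▸ div_mul_cancel₀ bm hsum.ne
  have hkey : |p - π| = -π / (bm * |d|) * ((bm + bp) * (p - π) * d) := by
    rcases hd.lt_or_gt with hd | hd
    · rw [abs_of_neg hd, abs_of_nonneg (nonneg_of_mul_nonpos_left hsign hd)]
      field_simp [hbm.ne, hd.ne]
      linear_combination -(p - π) * hπ'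
    · rw [abs_of_pos hd, abs_of_nonpos (nonpos_of_mul_nonpos_left hsign hd)]
      field_simp [hbm.ne, hd.ne]
      linear_combination (p - π) * hπ'
  calc |p - π| = -π / (bm * |d|) * ((bm + bp) * (p - π) * d) := hkey
    _ ≤ -π / (bm * |d|) * Δ := mul_le_mul_of_nonneg_left hΔ hc
    _ ≤ C * Δ := mul_le_mul_of_nonneg_right hC (hX.trans hΔ)

theorem abs_sub_le_mul_sub_of_affineOn {Q : ℝ → ℝ} {a b δ bm bp π p m C : ℝ}
    (ha : a < δ) (hb : δ < b)
    (hQ : ∀ z ∈ Icc a b, ∀ w ∈ Icc a b, Q w - Q z = (bm + bp) * (p - π) * (w - z))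
    (hma : m ≤ Q a) (hmb : m ≤ Q b) (hbm : bm < 0) (hsum : bm + bp < 0)
    (hπ : bm / (bm + bp) = π) (hCa : -π / (bm * |δ - a|) ≤ C) (hCb : -π / (bm * |δ - b|) ≤ C) :
    |p - π| ≤ C * (Q δ - m) := by
  have hδ : δ ∈ Icc a b := ⟨ha.le, hb.le⟩
  rcases le_or_gt p π with hp | hp
  · refine abs_sub_le_mul_of_slope_le hbm hsum hπ (sub_pos.2 ha).ne'
      (mul_nonpos_of_nonpos_of_nonneg (sub_nonpos.2 hp) (sub_pos.2 ha).le) ?_ hCa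
    rw [← hQ a (left_mem_Icc.2 (ha.trans hb).le) δ hδ]
    linarith
  · refine abs_sub_le_mul_of_slope_le hbm hsum hπ (sub_neg.2 hb).ne
      (mul_nonpos_of_nonneg_of_nonpos (sub_pos.2 hp).le (sub_neg.2 hb).le) ?_ hCb
    rw [← hQ b (right_mem_Icc.2 (ha.trans hb).le) δ hδ]
    linarith

theorem stmt_12_general (K : ℕ) (pp : ℕ → ℝ)
    (hppmono : ∀ k, 1 ≤ k → k < K → pp k < pp (k + 1))
    (Ap Bp Am Bm : ℕ → ℝ) (H Hm : ℕ → ℝ)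
    (hH0 : H 0 = Am 1 / Bm 1)
    (hHmid : ∀ k, 1 ≤ k → k ≤ K - 1 → H k = (Ap k - Ap (k + 1)) / (Bp (k + 1) - Bp k))
    (hHK : H K = -Ap K / Bp K)
    (hHm : ∀ k, 1 ≤ k → k ≤ K - 1 → Hm k = (Am k - Am (k + 1)) / (Bm (k + 1) - Bm k))
    (hC1p : ∀ k, 1 ≤ k → k < K → Bp k < Bp (k + 1)) (hC1pK : Bp K < 0)
    (hC1m : ∀ k, 1 ≤ k → k < K → Bm (k + 1) < Bm k) (hC1m1 : Bm 1 < 0)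
    (hC2a : ∀ k, 1 ≤ k → k ≤ K - 1 → -Hm k = H k)
    (hC2b : ∀ k, k < K → H k < H (k + 1))
    (hC3 : ∀ k ∈ Finset.Icc 1 K, Bm k / (Bm k + Bp k) = pp k)
    -- pointwise surrogate-optimal value
    (tst : ℝ → ℝ)
    (htst0 : ∀ p : ℝ, p ≤ pp 1 → tst p = H 0)
    (htstmid : ∀ p : ℝ, ∀ k, 1 ≤ k → k ≤ K - 1 → pp k < p → p ≤ pp (k + 1) → tst p = H k)
    (htstK : ∀ p : ℝ, pp K < p → tst p = H K)
    -- thresholds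
    (δ : ℕ → ℝ) (hδ : ∀ k ∈ Finset.Icc 1 K, H (k - 1) < δ k ∧ δ k < H k)
    -- the constant C
    (C : ℝ)
    (hC : IsGreatest
      {c : ℝ | ∃ k ∈ Finset.Icc 1 K, ∃ j ∈ Finset.Icc 0 K,
        c = -(pp k) / (Bm k * |δ k - H j|)} C) :
    ∀ p : ℝ, 0 ≤ p → p ≤ 1 → ∀ k ∈ Finset.Icc 1 K,
      |p - pp k| ≤ C * (condSurrRisk (phiPL K Ap Bp) (phiPL K Am Bm) p (δ k)
        - condSurrRisk (phiPL K Ap Bp) (phiPL K Am Bm) p (tst p)) := by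
  intro p _ _ k hk
  obtain ⟨hk1, hkK⟩ := Finset.mem_Icc.1 hk
  have hBp : MonotoneOn Bp (Icc 1 K) :=
    monotoneOn_nat_Icc_of_le_succ fun l h1 h2 => (hC1p l h1 h2).le
  have hBm : AntitoneOn Bm (Icc 1 K) :=
    antitoneOn_nat_Icc_of_succ_le fun l h1 h2 => (hC1m l h1 h2).le
  have hH : MonotoneOn H (Icc 0 K) := monotoneOn_nat_Icc_of_le_succ fun l _ h => (hC2b l h).le
  have hpp : MonotoneOn pp (Icc 1 K) :=
    monotoneOn_nat_Icc_of_le_succ fun l h1 h2 => (hppmono l h1 h2).le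
  have hneg : ∀ i ∈ Icc 1 K, Bm i < 0 ∧ Bm i + Bp i < 0 := fun i hi =>
    have hBmi := (hBm ⟨le_rfl, hi.1.trans hi.2⟩ hi hi.1).trans_lt hC1m1
    ⟨hBmi, add_neg hBmi ((hBp hi ⟨hi.1.trans hi.2, le_rfl⟩ hi.2).trans_lt hC1pK)⟩
  set Q := condSurrRisk (phiPL K Ap Bp) (phiPL K Am Bm) p
  have hslope : ∀ i ∈ Icc 1 K, ∀ z ∈ Icc (H (i - 1)) (H i), ∀ w ∈ Icc (H (i - 1)) (H i),
      Q w - Q z = (Bm i + Bp i) * (p - pp i) * (w - z) := fun i hi z hz w hw =>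
    condSurrRisk_sub_eq_of_mem_Icc hBp hBm hH hH0 hHmid hHK hHm hC1p hC1pK hC1m hC1m1 hC2a hi
      (hC3 i (Finset.mem_Icc.2 hi)) p hz hw
  obtain ⟨j, hjK, htst, hlow, hhigh⟩ :=
    exists_optimal_eq_H (hk1.trans hkK) hpp htst0 htstmid htstK p
  have hmin : IsMinOn (Q ∘ H) (Icc 0 K) j :=
    isMinOn_comp_of_slope hjK hH (fun i hi => (hneg i hi).2.le) hslope hlow hhigh
  rw [htst]
  exact abs_sub_le_mul_sub_of_affineOn (hδ k hk).1 (hδ k hk).2 (hslope k ⟨hk1, hkK⟩)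
    (hmin ⟨(k - 1).zero_le, (k.sub_le 1).trans hkK⟩) (hmin ⟨k.zero_le, hkK⟩)
    (hneg k ⟨hk1, hkK⟩).1 (hneg k ⟨hk1, hkK⟩).2 (hC3 k hk)
    (hC.2 ⟨k, hk, k - 1, Finset.mem_Icc.2 ⟨(k - 1).zero_le, (k.sub_le 1).trans hkK⟩, rfl⟩)
    (hC.2 ⟨k, hk, k, Finset.mem_Icc.2 ⟨k.zero_le, hkK⟩, rfl⟩)

/-- Pointwise comparison inequality for minimally consistent piecewise linear surrogates:
with `s = 1` and `C = max{ −π_k/(B⁻_k·|δ_k − H_j|) : 1 ≤ k ≤ K, 0 ≤ j ≤ K }`, for every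
`p ∈ [0,1]` and `k`, `|p − π_k| ≤ C·(Q_p(δ_k) − Q_p(t*_p))`. -/
theorem stmt_12 (K : ℕ) (hK : 1 ≤ K) (pp : ℕ → ℝ)
    (hpp0 : 0 < pp 1) (hppK : pp K < 1)
    (hppmono : ∀ k, 1 ≤ k → k < K → pp k < pp (k + 1))
    (Ap Bp Am Bm : ℕ → ℝ) (H Hm : ℕ → ℝ)
    (hH0 : H 0 = Am 1 / Bm 1)
    (hHmid : ∀ k, 1 ≤ k → k ≤ K - 1 → H k = (Ap k - Ap (k + 1)) / (Bp (k + 1) - Bp k))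
    (hHK : H K = -Ap K / Bp K)
    (hHm : ∀ k, 1 ≤ k → k ≤ K - 1 → Hm k = (Am k - Am (k + 1)) / (Bm (k + 1) - Bm k))
    (hC1p : ∀ k, 1 ≤ k → k < K → Bp k < Bp (k + 1)) (hC1pK : Bp K < 0)
    (hC1m : ∀ k, 1 ≤ k → k < K → Bm (k + 1) < Bm k) (hC1m1 : Bm 1 < 0)
    (hC2a : ∀ k, 1 ≤ k → k ≤ K - 1 → -Hm k = H k)
    (hC2b : ∀ k, k < K → H k < H (k + 1))
    (hC3 : ∀ k ∈ Finset.Icc 1 K, Bm k / (Bm k + Bp k) = pp k)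
    -- pointwise surrogate-optimal value
    (tst : ℝ → ℝ)
    (htst0 : ∀ p : ℝ, p ≤ pp 1 → tst p = H 0)
    (htstmid : ∀ p : ℝ, ∀ k, 1 ≤ k → k ≤ K - 1 → pp k < p → p ≤ pp (k + 1) → tst p = H k)
    (htstK : ∀ p : ℝ, pp K < p → tst p = H K)
    -- thresholds
    (δ : ℕ → ℝ) (hδ : ∀ k ∈ Finset.Icc 1 K, H (k - 1) < δ k ∧ δ k < H k)
    -- the constant C
    (C : ℝ)
    (hC : IsGreatest
      {c : ℝ | ∃ k ∈ Finset.Icc 1 K, ∃ j ∈ Finset.Icc 0 K,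
        c = -(pp k) / (Bm k * |δ k - H j|)} C) :
    ∀ p : ℝ, 0 ≤ p → p ≤ 1 → ∀ k ∈ Finset.Icc 1 K,
      |p - pp k| ≤ C * (condSurrRisk (phiPL K Ap Bp) (phiPL K Am Bm) p (δ k)
        - condSurrRisk (phiPL K Ap Bp) (phiPL K Am Bm) p (tst p)) :=
  stmt_12_general K pp hppmono Ap Bp Am Bm H Hm hH0 hHmid hHK hHm hC1p hC1pK hC1m hC1m1 hC2a hC2b
    hC3 tst htst0 htstmid htstK δ hδ C hC
end

section
/- Suppose conditions (C1)–(C3) hold for the piecewise linear surrogates φ⁺, φ⁻. Set L = max{−B⁺_1, −B⁻_K} (the common Lipschitz constant of φ⁺ and φ⁻) and M = max{|H_0|, |H_K|}. Then for every B > 0, every p ∈ [0,1], and every t ∈ ℝ with |t| ≤ B: p·(φ⁺(t) − φ⁺(t*_p))² + (1−p)·(φ⁻(−t) − φ⁻(−t*_p))² ≤ L²·(B + M)·ρ_p(t). -/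
/-- Pseudo-distance `ρ_p(t)`: `p·|t − t*_p|` if `p < π_1` and `t < H_0`;
`(1−p)·|t − t*_p|` if `p > π_K` and `t > H_K`; `|t − t*_p|` otherwise. -/
noncomputable def rhoPL (K : ℕ) (pp : ℕ → ℝ) (H : ℕ → ℝ) (tst : ℝ → ℝ) (p t : ℝ) : ℝ :=
  if p < pp 1 ∧ t < H 0 then p * |t - tst p|
  else if pp K < p ∧ H K < t then (1 - p) * |t - tst p|
  else |t - tst p|

open Finset

lemma monotoneOn_Icc_of_le_add_one {β : Type*} [Preorder β] {f : ℕ → β} {m n : ℕ}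
    (hf : ∀ k, m ≤ k → k < n → f k ≤ f (k + 1)) : MonotoneOn f (Set.Icc m n) :=
  monotoneOn_of_le_succ Set.ordConnected_Icc fun k _ hk hk' => by
    rw [Order.succ_eq_add_one] at hk' ⊢
    exact hf k hk.1 hk'.2

lemma mem_Icc_of_forall_lt_add_one {f : ℕ → ℝ} {K : ℕ} (hf : ∀ k < K, f k < f (k + 1))
    {k : ℕ} (hk : k ≤ K) : f k ∈ Set.Icc (f 0) (f K) :=
  have hmono : MonotoneOn f (Set.Icc 0 K) :=
    monotoneOn_Icc_of_le_add_one fun k _ hk => (hf k hk).le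
  ⟨hmono ⟨le_rfl, K.zero_le⟩ ⟨k.zero_le, hk⟩ k.zero_le,
    hmono ⟨k.zero_le, hk⟩ ⟨K.zero_le, le_rfl⟩ hk⟩

lemma abs_le_neg_of_lt_add_one {f : ℕ → ℝ} {m n k : ℕ}
    (hf : ∀ k, m ≤ k → k < n → f k < f (k + 1)) (hn : f n < 0) (hk : k ∈ Icc m n) :
    |f k| ≤ -f m := by
  have hmono : MonotoneOn f (Set.Icc m n) :=
    monotoneOn_Icc_of_le_add_one fun k hmk hkn => (hf k hmk hkn).le
  rw [← mem_coe, coe_Icc] at hk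
  rw [abs_of_neg ((hmono hk ⟨hk.1.trans hk.2, le_rfl⟩ hk.2).trans_lt hn)]
  exact neg_le_neg (hmono ⟨le_rfl, hk.1.trans hk.2⟩ hk hk.1)

lemma abs_le_neg_of_add_one_lt {f : ℕ → ℝ} {m n k : ℕ}
    (hf : ∀ k, m ≤ k → k < n → f (k + 1) < f k) (hm : f m < 0) (hk : k ∈ Icc m n) :
    |f k| ≤ -f n := by
  have hanti : AntitoneOn f (Set.Icc m n) :=
    monotoneOn_Icc_of_le_add_one (β := ℝᵒᵈ) fun k hmk hkn => (hf k hmk hkn).le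
  rw [← mem_coe, coe_Icc] at hk
  rw [abs_of_neg ((hanti ⟨le_rfl, hk.1.trans hk.2⟩ hk hk.1).trans_lt hm)]
  exact neg_le_neg (hanti hk ⟨hk.1.trans hk.2, le_rfl⟩ hk.2)

lemma exists_lt_le_add_one_of_lt_of_le {β : Type*} [LinearOrder β] {f : ℕ → β} {m n : ℕ}
    {x : β} (hmn : m ≤ n) (hm : f m < x) (hn : x ≤ f n) :
    ∃ k, m ≤ k ∧ k < n ∧ f k < x ∧ x ≤ f (k + 1) := by
  induction n, hmn using Nat.le_induction with
  | base => exact absurd hn hm.not_ge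
  | succ n hmn ih =>
    by_cases hxn : x ≤ f n
    · obtain ⟨k, hmk, hkn, hk⟩ := ih hxn
      exact ⟨k, hmk, hkn.trans (lt_add_one n), hk⟩
    · exact ⟨n, hmn, lt_add_one n, not_le.1 hxn, hn⟩

lemma fold_max_le_fold_max_add {ι : Type*} {s : Finset ι} {f g : ι → ℝ} {b C : ℝ}
    (hC : 0 ≤ C) (h : ∀ i ∈ s, f i ≤ g i + C) : s.fold max b f ≤ s.fold max b g + C :=
  (fold_max_le _).2 ⟨le_add_of_le_of_nonneg ((le_fold_max _).2 (Or.inl le_rfl)) hC,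
    fun i hi =>
      (h i hi).trans (add_le_add_left ((le_fold_max _).2 (Or.inr ⟨i, hi, le_rfl⟩)) C)⟩

lemma abs_fold_max_sub_fold_max_le {ι : Type*} {s : Finset ι} {f g : ι → ℝ} {b C : ℝ}
    (hC : 0 ≤ C) (h : ∀ i ∈ s, |f i - g i| ≤ C) :
    |s.fold max b f - s.fold max b g| ≤ C := by
  refine abs_sub_le_iff.2 ⟨?_, ?_⟩ <;> rw [sub_le_iff_le_add'] <;>
    refine fold_max_le_fold_max_add hC fun i hi => ?_
  · linarith [le_of_abs_le (h i hi)]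
  · linarith [neg_le_of_abs_le (h i hi)]

lemma add_mul_le_add_mul_of_div_le {a b a' b' x : ℝ} (hb : b < b')
    (hx : (a - a') / (b' - b) ≤ x) : a + b * x ≤ a' + b' * x := by
  rw [div_le_iff₀ (sub_pos.2 hb)] at hx
  linarith

lemma sq_le_mul_of_abs_le_mul {u d L D : ℝ} (hu : |u| ≤ L * d) (hd : 0 ≤ d) (hdD : d ≤ D) :
    u ^ 2 ≤ L ^ 2 * D * d := by
  have hLd : 0 ≤ L * d := (abs_nonneg u).trans hu
  calc u ^ 2 = |u| ^ 2 := (sq_abs u).symm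
    _ ≤ (L * d) ^ 2 := pow_le_pow_left₀ (abs_nonneg u) hu 2
    _ = L ^ 2 * d * d := by ring
    _ ≤ L ^ 2 * D * d := by gcongr

section PiecewiseLinear

variable {K : ℕ} {A B : ℕ → ℝ}

lemma phiPL_eq_zero_of_forall_le_s14 {z : ℝ} (h : ∀ k ∈ Icc 1 K, A k + B k * z ≤ 0) :
    phiPL K A B z = 0 :=
  le_antisymm ((fold_max_le _).2 ⟨le_rfl, h⟩) ((le_fold_max _).2 (Or.inl le_rfl))

lemma abs_phiPL_sub_le {L : ℝ} (hL : 0 ≤ L) (hB : ∀ k ∈ Icc 1 K, |B k| ≤ L) (x y : ℝ) :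
    |phiPL K A B x - phiPL K A B y| ≤ L * |x - y| :=
  abs_fold_max_sub_fold_max_le (mul_nonneg hL (abs_nonneg _)) fun k hk => by
    rw [add_sub_add_left_eq_sub, ← mul_sub, abs_mul]
    exact mul_le_mul_of_nonneg_right (hB k hk) (abs_nonneg _)

lemma phiPL_eq_zero_of_slope_lt_succ (hB : ∀ k, 1 ≤ k → k < K → B k < B (k + 1))
    (hBK : B K < 0) {x : ℝ}
    (hx : ∀ k, 1 ≤ k → k < K → (A k - A (k + 1)) / (B (k + 1) - B k) ≤ x)
    (hxK : -A K / B K ≤ x) : phiPL K A B x = 0 := by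
  have hline : MonotoneOn (fun k => A k + B k * x) (Set.Icc 1 K) :=
    monotoneOn_Icc_of_le_add_one fun k hk hkK =>
      add_mul_le_add_mul_of_div_le (hB k hk hkK) (hx k hk hkK)
  have hlineK : A K + B K * x ≤ 0 := by
    rw [div_le_iff_of_neg hBK] at hxK
    linarith
  refine phiPL_eq_zero_of_forall_le_s14 fun k hk => ?_
  rw [← mem_coe, coe_Icc] at hk
  exact (hline hk ⟨hk.1.trans hk.2, le_rfl⟩ hk.2).trans hlineK

lemma phiPL_eq_zero_of_slope_succ_lt (hB : ∀ k, 1 ≤ k → k < K → B (k + 1) < B k)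
    (hB1 : B 1 < 0) {x : ℝ}
    (hx : ∀ k, 1 ≤ k → k < K → (A k - A (k + 1)) / (B (k + 1) - B k) ≤ x)
    (hx1 : -A 1 / B 1 ≤ x) : phiPL K A B x = 0 := by
  have hline : AntitoneOn (fun k => A k + B k * x) (Set.Icc 1 K) :=
    monotoneOn_Icc_of_le_add_one (β := ℝᵒᵈ) fun k hk hkK => by
      refine add_mul_le_add_mul_of_div_le (hB k hk hkK) ?_
      rw [← neg_div_neg_eq, neg_sub, neg_sub]
      exact hx k hk hkK
  have hline1 : A 1 + B 1 * x ≤ 0 := by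
    rw [div_le_iff_of_neg hB1] at hx1
    linarith
  refine phiPL_eq_zero_of_forall_le_s14 fun k hk => ?_
  rw [← mem_coe, coe_Icc] at hk
  exact (hline ⟨le_rfl, hk.1.trans hk.2⟩ hk hk.1).trans hline1

end PiecewiseLinear

lemma exists_tst_eq_hinge {K : ℕ} (hK : 1 ≤ K) {pp H : ℕ → ℝ} {tst : ℝ → ℝ}
    (htst0 : ∀ p : ℝ, p ≤ pp 1 → tst p = H 0)
    (htstmid : ∀ p : ℝ, ∀ k, 1 ≤ k → k ≤ K - 1 → pp k < p → p ≤ pp (k + 1) → tst p = H k)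
    (htstK : ∀ p : ℝ, pp K < p → tst p = H K) (p : ℝ) : ∃ k ≤ K, tst p = H k := by
  rcases le_or_gt p (pp 1) with hp1 | hp1
  · exact ⟨0, K.zero_le, htst0 p hp1⟩
  rcases lt_or_ge (pp K) p with hpK | hpK
  · exact ⟨K, le_rfl, htstK p hpK⟩
  obtain ⟨k, hk1, hkK, hpk, hpk1⟩ := exists_lt_le_add_one_of_lt_of_le hK hp1 hpK
  exact ⟨k, hkK.le, htstmid p k hk1 (by omega) hpk hpk1⟩

theorem stmt_14_general (K : ℕ) (hK : 1 ≤ K) (pp : ℕ → ℝ)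
    (Ap Bp Am Bm : ℕ → ℝ) (H Hm : ℕ → ℝ)
    (hH0 : H 0 = Am 1 / Bm 1)
    (hHmid : ∀ k, 1 ≤ k → k ≤ K - 1 → H k = (Ap k - Ap (k + 1)) / (Bp (k + 1) - Bp k))
    (hHK : H K = -Ap K / Bp K)
    (hHm : ∀ k, 1 ≤ k → k ≤ K - 1 → Hm k = (Am k - Am (k + 1)) / (Bm (k + 1) - Bm k))
    (hC1p : ∀ k, 1 ≤ k → k < K → Bp k < Bp (k + 1)) (hC1pK : Bp K < 0)
    (hC1m : ∀ k, 1 ≤ k → k < K → Bm (k + 1) < Bm k) (hC1m1 : Bm 1 < 0)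
    (hC2a : ∀ k, 1 ≤ k → k ≤ K - 1 → -Hm k = H k)
    (hC2b : ∀ k, k < K → H k < H (k + 1))
    -- pointwise surrogate-optimal value
    (tst : ℝ → ℝ)
    (htst0 : ∀ p : ℝ, p ≤ pp 1 → tst p = H 0)
    (htstmid : ∀ p : ℝ, ∀ k, 1 ≤ k → k ≤ K - 1 → pp k < p → p ≤ pp (k + 1) → tst p = H k)
    (htstK : ∀ p : ℝ, pp K < p → tst p = H K)
    (L M : ℝ) (hL : L = max (-Bp 1) (-Bm K)) (hM : M = max |H 0| |H K|) :
    ∀ B : ℝ, 0 < B → ∀ p : ℝ, 0 ≤ p → p ≤ 1 → ∀ t : ℝ, |t| ≤ B →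
      p * (phiPL K Ap Bp t - phiPL K Ap Bp (tst p)) ^ 2
        + (1 - p) * (phiPL K Am Bm (-t) - phiPL K Am Bm (-(tst p))) ^ 2
      ≤ L ^ 2 * (B + M) * rhoPL K pp H tst p t := by
  intro B _ p hp0 hp1 t ht
  have hHmem k (hk : k ≤ K) := mem_Icc_of_forall_lt_add_one hC2b hk
  have hslopeP : ∀ k ∈ Icc 1 K, |Bp k| ≤ L := fun k hk =>
    hL ▸ le_max_of_le_left (abs_le_neg_of_lt_add_one hC1p hC1pK hk)
  have hslopeM : ∀ k ∈ Icc 1 K, |Bm k| ≤ L := fun k hk =>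
    hL ▸ le_max_of_le_right (abs_le_neg_of_add_one_lt hC1m hC1m1 hk)
  have hL0 : 0 ≤ L := (abs_nonneg _).trans (hslopeP K (right_mem_Icc.2 hK))
  have hdist : |t - tst p| ≤ B + M := by
    obtain ⟨k, hk, htk⟩ := exists_tst_eq_hinge hK htst0 htstmid htstK p
    calc |t - tst p| ≤ |t| + |tst p| := abs_sub _ _
      _ ≤ B + M := add_le_add ht (hM ▸ htk ▸ abs_le_max_abs_abs (hHmem k hk).1 (hHmem k hk).2)
  have hsqP := sq_le_mul_of_abs_le_mul (abs_phiPL_sub_le (A := Ap) hL0 hslopeP t (tst p))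
    (abs_nonneg _) hdist
  have hsqM := sq_le_mul_of_abs_le_mul
    ((abs_phiPL_sub_le (A := Am) hL0 hslopeM (-t) (-tst p)).trans_eq
      (by rw [neg_sub_neg, abs_sub_comm])) (abs_nonneg _) hdist
  have hzeroP : ∀ x, H K ≤ x → phiPL K Ap Bp x = 0 := fun x hx =>
    phiPL_eq_zero_of_slope_lt_succ hC1p hC1pK (fun k hk hkK => by
      rw [← hHmid k hk (by omega)]; exact (hHmem k hkK.le).2.trans hx) (hHK ▸ hx)
  have hzeroM : ∀ z, -H 0 ≤ z → phiPL K Am Bm z = 0 := fun z hz =>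
    phiPL_eq_zero_of_slope_succ_lt hC1m hC1m1 (fun k hk hkK => by
      rw [← hHm k hk (by omega), ← neg_neg (Hm k), hC2a k hk (by omega)]
      exact (neg_le_neg (hHmem k hkK.le).1).trans hz) (by rwa [neg_div, ← hH0])
  unfold rhoPL
  split_ifs with hlow hhigh
  · rw [htst0 p hlow.1.le] at hsqP ⊢
    rw [hzeroM _ (neg_le_neg hlow.2.le), hzeroM _ le_rfl]
    nlinarith
  · rw [htstK p hhigh.1] at hsqM ⊢
    rw [hzeroP _ hhigh.2.le, hzeroP _ le_rfl]
    nlinarith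
  · nlinarith

/-- Second-moment bound for the excess losses of a minimally consistent piecewise linear
surrogate: with `L = max{−B⁺_1, −B⁻_K}` and `M = max{|H_0|, |H_K|}`, for every `B > 0`,
`p ∈ [0,1]` and `|t| ≤ B`,
`p·(φ⁺(t) − φ⁺(t*_p))² + (1−p)·(φ⁻(−t) − φ⁻(−t*_p))² ≤ L²·(B + M)·ρ_p(t)`. -/
theorem stmt_14 (K : ℕ) (hK : 1 ≤ K) (pp : ℕ → ℝ)
    (hpp0 : 0 < pp 1) (hppK : pp K < 1)
    (hppmono : ∀ k, 1 ≤ k → k < K → pp k < pp (k + 1))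
    (Ap Bp Am Bm : ℕ → ℝ) (H Hm : ℕ → ℝ)
    (hH0 : H 0 = Am 1 / Bm 1)
    (hHmid : ∀ k, 1 ≤ k → k ≤ K - 1 → H k = (Ap k - Ap (k + 1)) / (Bp (k + 1) - Bp k))
    (hHK : H K = -Ap K / Bp K)
    (hHm : ∀ k, 1 ≤ k → k ≤ K - 1 → Hm k = (Am k - Am (k + 1)) / (Bm (k + 1) - Bm k))
    (hC1p : ∀ k, 1 ≤ k → k < K → Bp k < Bp (k + 1)) (hC1pK : Bp K < 0)
    (hC1m : ∀ k, 1 ≤ k → k < K → Bm (k + 1) < Bm k) (hC1m1 : Bm 1 < 0)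
    (hC2a : ∀ k, 1 ≤ k → k ≤ K - 1 → -Hm k = H k)
    (hC2b : ∀ k, k < K → H k < H (k + 1))
    (hC3 : ∀ k ∈ Finset.Icc 1 K, Bm k / (Bm k + Bp k) = pp k)
    -- pointwise surrogate-optimal value
    (tst : ℝ → ℝ)
    (htst0 : ∀ p : ℝ, p ≤ pp 1 → tst p = H 0)
    (htstmid : ∀ p : ℝ, ∀ k, 1 ≤ k → k ≤ K - 1 → pp k < p → p ≤ pp (k + 1) → tst p = H k)
    (htstK : ∀ p : ℝ, pp K < p → tst p = H K)
    (L M : ℝ) (hL : L = max (-Bp 1) (-Bm K)) (hM : M = max |H 0| |H K|) :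
    ∀ B : ℝ, 0 < B → ∀ p : ℝ, 0 ≤ p → p ≤ 1 → ∀ t : ℝ, |t| ≤ B →
      p * (phiPL K Ap Bp t - phiPL K Ap Bp (tst p)) ^ 2
        + (1 - p) * (phiPL K Am Bm (-t) - phiPL K Am Bm (-(tst p))) ^ 2
      ≤ L ^ 2 * (B + M) * rhoPL K pp H tst p t :=
  stmt_14_general K hK pp Ap Bp Am Bm H Hm hH0 hHmid hHK hHm hC1p hC1pK hC1m hC1m1 hC2a hC2b tst
    htst0 htstmid htstK L M hL hM
end

section
/- For every g ∈ [0,1]: lim_{K→∞} (2/K)·Σ_{k=1}^{K} (1 − k/(K+1))·𝟙{g ≤ k/(K+1)} = (1−g)², and lim_{K→∞} (2/K)·Σ_{k=1}^{K} (k/(K+1))·𝟙{g > k/(K+1)} = g². (This is the limiting form of the generalized 0–1 loss with equally spaced boundaries π_k = k/(K+1) as the number of boundaries grows, recovering the squared-error theoretical loss of soft classification.) -/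
/-!
Only the boundaries `k/(K+1) < g` matter, and they are exactly `k = 1, …, N` with
`N = ⌈g(K+1)⌉ - 1`, so `N/K → g`. By Gauss's formula `(2/K) ∑_{k ≤ N} k/(K+1) = N(N+1)/(K(K+1))`,
which tends to `g²`. The first loss is the sum of `1 - k/(K+1)` over all `k ≤ K` minus the same sum over `k ≤ N`;
after scaling these tend to `2 - 1` and `2g - g²`, leaving `(1 - g)²`.
-/

open Filter Finset Topology

lemma sum_Icc_one_natCast (n : ℕ) : ∑ k ∈ Icc 1 n, (k : ℝ) = n * (n + 1) / 2 := by
  induction n with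
  | zero => simp
  | succ n ih =>
    rw [sum_Icc_succ_top (by omega), ih]
    push_cast
    ring

lemma tendsto_div_of_abs_sub_mul_le {a : ℕ → ℝ} {c C : ℝ} (h : ∀ K : ℕ, |a K - c * K| ≤ C) :
    Tendsto (fun K : ℕ => a K / K) atTop (𝓝 c) := by
  have hC : Tendsto (fun K : ℕ => C / (K : ℝ)) atTop (𝓝 0) :=
    tendsto_const_nhds.div_atTop tendsto_natCast_atTop_atTop
  rw [tendsto_iff_norm_sub_tendsto_zero]
  refine squeeze_zero' (Eventually.of_forall fun _ => norm_nonneg _) ?_ hC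
  filter_upwards [eventually_gt_atTop 0] with K hK
  have hK : (0 : ℝ) < K := by exact_mod_cast hK
  rw [Real.norm_eq_abs, ← mul_div_cancel_right₀ c hK.ne', ← sub_div, abs_div,
    abs_of_pos hK]
  exact div_le_div_of_nonneg_right (h K) hK.le

section RiemannSum

variable {N : ℕ → ℕ} {c : ℝ}

lemma tendsto_two_div_mul_sum_Icc_div_succ
    (hN : Tendsto (fun K : ℕ => (N K : ℝ) / K) atTop (𝓝 c)) :
    Tendsto (fun K : ℕ => (2 / K : ℝ) * ∑ k ∈ Icc 1 (N K), (k : ℝ) / (K + 1))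
      atTop (𝓝 (c ^ 2)) := by
  have hsucc : Tendsto (fun K : ℕ => ((N K : ℝ) + 1) / (K + 1)) atTop (𝓝 c) := by
    have h := (hN.mul (tendsto_natCast_div_add_atTop (1 : ℝ))).add
      (tendsto_one_div_add_atTop_nhds_zero_nat (𝕜 := ℝ))
    rw [mul_one, add_zero] at h
    refine h.congr' ?_
    filter_upwards [eventually_ne_atTop 0] with K hK
    have hK : (K : ℝ) ≠ 0 := Nat.cast_ne_zero.mpr hK
    field_simp
  refine (sq c ▸ hN.mul hsucc).congr fun K => ?_
  rw [← sum_div, sum_Icc_one_natCast]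
  rcases eq_or_ne (K : ℝ) 0 with hK | hK
  · simp [hK]
  · field_simp

lemma tendsto_two_div_mul_sum_Icc_one_sub_div_succ
    (hN : Tendsto (fun K : ℕ => (N K : ℝ) / K) atTop (𝓝 c)) :
    Tendsto (fun K : ℕ => (2 / K : ℝ) * ∑ k ∈ Icc 1 (N K), (1 - (k : ℝ) / (K + 1)))
      atTop (𝓝 (2 * c - c ^ 2)) := by
  refine ((hN.const_mul 2).sub (tendsto_two_div_mul_sum_Icc_div_succ hN)).congr fun K => ?_
  rw [sum_sub_distrib, mul_sub, sum_const, Nat.card_Icc]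
  simp only [add_tsub_cancel_right, nsmul_eq_mul, mul_one]
  ring

end RiemannSum

lemma filter_Icc_div_succ_lt {g : ℝ} (hg : g ≤ 1) (K : ℕ) :
    (Icc 1 K).filter (fun k : ℕ => (k : ℝ) / (K + 1) < g) = Icc 1 (⌈g * (K + 1)⌉₊ - 1) := by
  have hceil : ⌈g * (K + 1)⌉₊ ≤ K + 1 := Nat.ceil_le.mpr (by push_cast; nlinarith)
  ext k
  simp only [mem_filter, mem_Icc, div_lt_iff₀ (by positivity : (0 : ℝ) < K + 1),
    ← Nat.lt_ceil]
  omega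

lemma tendsto_ceil_mul_succ_sub_one_div {g : ℝ} (hg0 : 0 ≤ g) (hg1 : g ≤ 1) :
    Tendsto (fun K : ℕ => ((⌈g * (K + 1)⌉₊ - 1 : ℕ) : ℝ) / K) atTop (𝓝 g) := by
  refine tendsto_div_of_abs_sub_mul_le (C := 1) fun K => abs_le.mpr ⟨?_, ?_⟩
  · have hceil := Nat.le_ceil (g * (K + 1))
    have : (⌈g * (K + 1)⌉₊ : ℝ) ≤ ((⌈g * (K + 1)⌉₊ - 1 : ℕ) : ℝ) + 1 := by
      exact_mod_cast le_tsub_add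
    linarith
  · have : ((⌈g * (K + 1)⌉₊ - 1 : ℕ) : ℝ) ≤ g * (K + 1) := by
      rcases eq_or_ne ⌈g * (K + 1)⌉₊ 0 with h | h
      · rw [h]; push_cast; positivity
      · exact ((Nat.ceil_eq_iff h).mp rfl).1.le
    linarith

/-- Limiting form of the generalized 0-1 loss with equally spaced boundaries
`π_k = k/(K+1)`: as `K → ∞`, the positive-class loss tends to `(1−g)²` and the
negative-class loss tends to `g²`, recovering the squared-error loss of soft
classification. -/
theorem stmt_19 (g : ℝ) (hg0 : 0 ≤ g) (hg1 : g ≤ 1) :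
    Tendsto (fun K : ℕ => (2 / K : ℝ) * ∑ k ∈ Finset.Icc 1 K,
        (1 - (k : ℝ) / (K + 1)) * (if g ≤ (k : ℝ) / (K + 1) then (1 : ℝ) else 0))
      atTop (nhds ((1 - g) ^ 2))
    ∧ Tendsto (fun K : ℕ => (2 / K : ℝ) * ∑ k ∈ Finset.Icc 1 K,
        ((k : ℝ) / (K + 1)) * (if (k : ℝ) / (K + 1) < g then (1 : ℝ) else 0))
      atTop (nhds (g ^ 2)) := by
  have hN := tendsto_ceil_mul_succ_sub_one_div hg0 hg1
  have hid : Tendsto (fun K : ℕ => (K : ℝ) / K) atTop (𝓝 1) :=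
    tendsto_div_of_abs_sub_mul_le (C := 0) fun K => by simp
  constructor
  · have h := (tendsto_two_div_mul_sum_Icc_one_sub_div_succ hid).sub
      (tendsto_two_div_mul_sum_Icc_one_sub_div_succ hN)
    convert h using 2 with K
    · rw [← mul_sub, ← filter_Icc_div_succ_lt hg1, sum_filter, ← sum_sub_distrib]
      refine congrArg _ (sum_congr rfl fun k _ => ?_)
      split_ifs <;> linarith
    · ring
  · refine (tendsto_two_div_mul_sum_Icc_div_succ hN).congr fun K => ?_
    rw [← filter_Icc_div_succ_lt hg1, sum_filter]
    simp_rw [mul_ite, mul_one, mul_zero]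
end
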